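/- Let m, N ∈ ℕ with N ≥ 1, let a ∈ ℝ, h > 0, and define grid nodes x_j = a + j·h for j = 0,…,N, with cells I_j = [x_{j−1}, x_j] for j = 1,…,N. Let s ≥ 1, let α_1,…,α_s ∈ ℝ be the weights of an s-stage one-step method, let Δt ∈ ℝ, and for each stage i = 1,…,s and each cell j = 1,…,N let F_{i,j} be a real polynomial (the stage flux on cell I_j). For each cell j let u_j and v_j be real polynomials (the solution on cell I_j before and after the step) satisfying the update v_j = u_j − Δt · Σ_{i=1}^{s} α_i · (F_{i,j})′, where ′ denotes the polynomial derivative. Assume the stage fluxes have m continuous derivatives across interfaces and are periodic: for every i, every k with 0 ≤ k ≤ m, and every interior node index j = 1,…,N−1, the k-th derivative of F_{i,j} evaluated at x_j equals the k-th derivative of F_{i,j+1} evaluated at x_j; and the k-th derivative of F_{i,N} at x_N equals the k-th derivative of F_{i,1} at x_0. Then for every k with 0 ≤ k ≤ m, the total integral of the k-th spatial derivative is conserved over the step: Σ_{j=1}^{N} ∫_{x_{j−1}}^{x_j} (d^k/dx^k) v_j(x) dx = Σ_{j=1}^{N} ∫_{x_{j−1}}^{x_j} (d^k/dx^k) u_j(x)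 dx. -/

import Mathlib

/-!
The update subtracts from `u_j` the derivative of `P_j = Δt ∑ i, α_i F_{i,j}`, so by the
fundamental theorem of calculus the integral of the `k`-th derivative over cell `j` drops by
`P_j^{(k)}(x_j) - P_j^{(k)}(x_{j-1})`. Since `P_j^{(k)}` is the same linear combination of the `F_{i,j}^{(k)}`, it is
continuous across the interior nodes and periodic, so these boundary terms cancel cyclically.
-/

open Polynomial Finset

theorem Finset.sum_Icc_eq_of_cyclic_shift {M : Type*} [AddCommMonoid M] {b c : ℕ → M} {N : ℕ}
    (hshift : ∀ j ∈ Icc 1 (N - 1), c (j + 1) = b j) (hwrap : c 1 = b N) :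
    ∑ j ∈ Icc 1 N, c j = ∑ j ∈ Icc 1 N, b j := by
  rcases N with _ | n
  · simp
  rw [← Ico_add_one_right_eq_Icc, sum_Ico_eq_sum_range, sum_Ico_eq_sum_range, Nat.add_sub_cancel,
    sum_range_succ', sum_range_succ, add_zero, hwrap, add_comm 1 n]
  congr 1
  refine sum_congr rfl fun j hj => ?_
  rw [← add_assoc, add_comm 1 j]
  exact hshift (j + 1) (by simp at hj ⊢; omega)

namespace Polynomial

theorem eval_iterate_derivative_C_mul_sum {R ι : Type*} [CommSemiring R] (s : Finset ι) (c : R)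
    (w : ι → R) (F : ι → R[X]) (k : ℕ) (x : R) :
    (derivative^[k] (C c * ∑ i ∈ s, C (w i) * F i)).eval x
      = c * ∑ i ∈ s, w i * (derivative^[k] (F i)).eval x := by
  simp [iterate_derivative_C_mul, iterate_derivative_sum, eval_finsetSum]

theorem integral_eval_derivative (p : ℝ[X]) (x y : ℝ) :
    ∫ t in x..y, (derivative p).eval t = p.eval y - p.eval x :=
  intervalIntegral.integral_eq_sub_of_hasDerivAt (fun t _ => p.hasDerivAt t)
    (p.derivative.continuous.intervalIntegrable x y)

theorem integral_eval_iterate_derivative_sub_derivative (u P : ℝ[X]) (k : ℕ) (x y : ℝ) :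
    ∫ t in x..y, (derivative^[k] (u - derivative P)).eval t
      = (∫ t in x..y, (derivative^[k] u).eval t)
        - ((derivative^[k] P).eval y - (derivative^[k] P).eval x) := by
  rw [iterate_derivative_sub, ← Function.iterate_succ_apply, Function.iterate_succ_apply',
    ← integral_eval_derivative]
  simp only [eval_sub]
  exact intervalIntegral.integral_sub ((derivative^[k] u).continuous.intervalIntegrable x y)
    ((derivative (derivative^[k] P)).continuous.intervalIntegrable x y)

end Polynomial

theorem flux_conservative_hermite_conservation_general
    (m N : ℕ) (a h : ℝ)
    (s : ℕ) (α : Fin s → ℝ) (Δt : ℝ)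
    (F : Fin s → ℕ → Polynomial ℝ) (u v : ℕ → Polynomial ℝ)
    (hupdate : ∀ j ∈ Finset.Icc 1 N,
      v j = u j - C Δt * ∑ i, C (α i) * derivative (F i j))
    (hcont : ∀ (i : Fin s), ∀ k ≤ m, ∀ j ∈ Finset.Icc 1 (N - 1),
      (derivative^[k] (F i j)).eval (a + (j : ℝ) * h)
        = (derivative^[k] (F i (j + 1))).eval (a + (j : ℝ) * h))
    (hper : ∀ (i : Fin s), ∀ k ≤ m,
      (derivative^[k] (F i N)).eval (a + (N : ℝ) * h)
        = (derivative^[k] (F i 1)).eval a) :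
    ∀ k ≤ m,
      ∑ j ∈ Finset.Icc 1 N,
          (∫ x in (a + ((j - 1 : ℕ) : ℝ) * h)..(a + (j : ℝ) * h),
            (derivative^[k] (v j)).eval x)
        = ∑ j ∈ Finset.Icc 1 N,
            (∫ x in (a + ((j - 1 : ℕ) : ℝ) * h)..(a + (j : ℝ) * h),
              (derivative^[k] (u j)).eval x) := by
  intro k hk
  set P : ℕ → ℝ[X] := fun j => C Δt * ∑ i, C (α i) * F i j
  have hv : ∀ j ∈ Icc 1 N, v j = u j - derivative (P j) := fun j hj => by
    simp [hupdate j hj, P]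
  have hnode : ∀ j ∈ Icc 1 (N - 1),
      (derivative^[k] (P (j + 1))).eval (a + ((j + 1 - 1 : ℕ) : ℝ) * h)
        = (derivative^[k] (P j)).eval (a + (j : ℝ) * h) := fun j hj => by
    simp only [P, eval_iterate_derivative_C_mul_sum, Nat.add_sub_cancel, hcont _ k hk j hj]
  have hwrap : (derivative^[k] (P 1)).eval (a + ((1 - 1 : ℕ) : ℝ) * h)
      = (derivative^[k] (P N)).eval (a + (N : ℝ) * h) := by
    simp only [P, eval_iterate_derivative_C_mul_sum, Nat.sub_self, Nat.cast_zero, zero_mul,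
      add_zero, hper _ k hk]
  rw [sum_congr rfl fun j hj => by rw [hv j hj, integral_eval_iterate_derivative_sub_derivative],
    sum_sub_distrib, sub_eq_self, sum_sub_distrib, sub_eq_zero]
  exact (sum_Icc_eq_of_cyclic_shift hnode hwrap).symm

/-- Conservation theorem for the flux-conservative Hermite method applied to
`u_t + f(u)_x = 0` with periodic boundary conditions on the uniform grid `x_j = a + j h`,
cells `I_j = [x_{j-1}, x_j]` for `j = 1, …, N`.  If the per-cell solution polynomials are
updated by an `s`-stage one-step method `v_j = u_j - Δt ∑ i, α_i (F_{i,j})'`, and the stage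
flux polynomials agree in derivatives of order `0, …, m` at every interior node and
periodically at the endpoints, then the total integral of each spatial derivative of order
`k ≤ m` is conserved over the step. -/
theorem flux_conservative_hermite_conservation
    (m N : ℕ) (hN : 1 ≤ N) (a h : ℝ) (hh : 0 < h)
    (s : ℕ) (hs : 1 ≤ s) (α : Fin s → ℝ) (Δt : ℝ)
    (F : Fin s → ℕ → Polynomial ℝ) (u v : ℕ → Polynomial ℝ)
    (hupdate : ∀ j ∈ Finset.Icc 1 N,
      v j = u j - C Δt * ∑ i, C (α i) * derivative (F i j))
    (hcont : ∀ (i : Fin s), ∀ k ≤ m, ∀ j ∈ Finset.Icc 1 (N - 1),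
      (derivative^[k] (F i j)).eval (a + (j : ℝ) * h)
        = (derivative^[k] (F i (j + 1))).eval (a + (j : ℝ) * h))
    (hper : ∀ (i : Fin s), ∀ k ≤ m,
      (derivative^[k] (F i N)).eval (a + (N : ℝ) * h)
        = (derivative^[k] (F i 1)).eval a) :
    ∀ k ≤ m,
      ∑ j ∈ Finset.Icc 1 N,
          (∫ x in (a + ((j - 1 : ℕ) : ℝ) * h)..(a + (j : ℝ) * h),
            (derivative^[k] (v j)).eval x)
        = ∑ j ∈ Finset.Icc 1 N,
            (∫ x in (a + ((j - 1 : ℕ) : ℝ) * h)..(a + (j : ℝ) * h),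
              (derivative^[k] (u j)).eval x) :=
  flux_conservative_hermite_conservation_general m N a h s α Δt F u v hupdate hcont hper
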